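/- Fix an integer n ≥ 2 and set b := -n + i. Let D ⊆ {0, 1, …, n²} be such that Δ := D − D is sparse. Let (α_j)_{j≥1} be a sequence with α_j ∈ Δ for all j, set α := π((α_j)), and let C(α) := C_{n,D} ∩ (C_{n,D} + α). Then for every k ≥ 1: (a) for every tuple (d_1, …, d_k) with d_j ∈ D ∩ (D + α_j) for each j, the k-tile T_{d_1…d_k} intersects C(α); and (b) C(α) is contained in the union of the k-tiles T_{d_1…d_k} over all tuples (d_1, …, d_k) with d_j ∈ D ∩ (D + α_j) for each j. -/

import Mathlib

open Complex Filter Pointwise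

/-- `piSum b d = ∑_{j≥1} d_j b^{-j}` (0-indexed: `d j` is the `(j+1)`-st digit). -/
noncomputable def piSum (b : ℂ) (d : ℕ → ℤ) : ℂ :=
  ∑' j : ℕ, (d j : ℂ) * b ^ (-((j : ℤ) + 1))

/-- The `n`-th fundamental tile `T_n`. -/
def fundTile (n : ℕ) : Set ℂ :=
  {z | ∃ d : ℕ → ℤ, (∀ j, 0 ≤ d j ∧ d j ≤ (n : ℤ) ^ 2) ∧
    z = piSum (-(n : ℂ) + Complex.I) d}

/-- The restricted digit set `C_{n,D}`. -/
def restrictedDigitSet (n : ℕ) (D : Set ℤ) : Set ℂ :=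
  {z | ∃ d : ℕ → ℤ, (∀ j, d j ∈ D) ∧ z = piSum (-(n : ℂ) + Complex.I) d}

/-- The `k`-tile of a set `T` with digits `d_1, …, d_k` (0-indexed). -/
def kTile (b : ℂ) (T : Set ℂ) (k : ℕ) (d : Fin k → ℤ) : Set ℂ :=
  {z | ∃ t ∈ T, z = (∑ j : Fin k, (d j : ℂ) * b ^ (-((j : ℤ) + 1))) + b ^ (-(k : ℤ)) * t}

/-- `Δ` is sparse: all distinct pairs differ by more than `2` when `n ≥ 5`,
and by more than `3` when `n ∈ {2, 3, 4}`. -/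
def Sparse (n : ℕ) (Δ : Set ℤ) : Prop :=
  ∀ δ ∈ Δ, ∀ δ' ∈ Δ, δ ≠ δ' →
    (5 ≤ n → 2 < |δ - δ'|) ∧ (n = 2 ∨ n = 3 ∨ n = 4 → 3 < |δ - δ'|)

/-!
If `z = π(e) = π(f) + π(α)` with digits `e, f` in `D`, then `g := e - f - α` has `π(g) = 0`,
and by sparseness every nonzero `g_j` is at least `3` (`4` if `n ≤ 4`) in absolute value.
Multiplying by `b²` gives `π(g₂, g₃, …) = -(g₀ b + g₁)`, whose imaginary part is `-g₀`. Since
`Im b⁻¹ = -1/|b|²` is small, `|Im π(h)| ≤ M / (|b| - 1)²` for digits bounded by `M = 2n²`, and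
this is below the gap for `n ≥ 3`; for `n = 2` one more shift, using `Im b² = -4`, suffices.
Hence `g₀ = 0`, and shifting gives `g = 0`: the digits of a point of `C(α)` satisfy
`e_j ∈ D ∩ (D + α_j)`, which is (b). For (a), extend the prefix `d` to a full sequence of such
digits.
-/

lemma Set.mem_add_singleton_iff_sub_mem {G : Type*} [AddGroup G] {s : Set G} {a x : G} :
    x ∈ s + {a} ↔ x - a ∈ s := by
  simp [Set.add_singleton, sub_eq_add_neg]

lemma exists_extend_fin {α : Type*} {P : ℕ → α → Prop} (hP : ∀ j, ∃ x, P j x) {k : ℕ}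
    {d : Fin k → α} (hd : ∀ j : Fin k, P j (d j)) :
    ∃ e : ℕ → α, (∀ j, P j (e j)) ∧ ∀ j : Fin k, e j = d j := by
  choose w hw using hP
  refine ⟨fun j => if h : j < k then d ⟨j, h⟩ else w j, fun j => ?_, fun j => dif_pos j.isLt⟩
  dsimp only
  split_ifs with h
  exacts [hd ⟨j, h⟩, hw j]

lemma abs_le_of_mem_sub {D : Set ℤ} {N : ℤ} (hD : D ⊆ Set.Icc 0 N) {δ : ℤ} (hδ : δ ∈ D - D) :
    |δ| ≤ N := by
  obtain ⟨a, ha, a', ha', rfl⟩ := hδ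
  obtain ⟨ha0, haN⟩ := hD ha
  obtain ⟨ha0', haN'⟩ := hD ha'
  exact abs_sub_le_iff.2 ⟨by omega, by omega⟩

lemma Complex.abs_im_pow_succ_le (w : ℂ) (m : ℕ) :
    |(w ^ (m + 1)).im| ≤ (m + 1) * |w.im| * ‖w‖ ^ m := by
  induction m with
  | zero => simp
  | succ m ih =>
    rw [pow_succ, mul_im]
    calc |(w ^ (m + 1)).re * w.im + (w ^ (m + 1)).im * w.re|
        ≤ |(w ^ (m + 1)).re| * |w.im| + |(w ^ (m + 1)).im| * |w.re| := by
          rw [← abs_mul, ← abs_mul]; exact abs_add_le _ _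
      _ ≤ ‖w‖ ^ (m + 1) * |w.im| + ((m + 1) * |w.im| * ‖w‖ ^ m) * ‖w‖ := by
          gcongr
          · exact (abs_re_le_norm _).trans (norm_pow w _).le
          · exact abs_re_le_norm w
      _ = ((m + 1 : ℕ) + 1) * |w.im| * ‖w‖ ^ (m + 1) := by push_cast; ring

lemma zpow_neg_natCast_add_one {G : Type*} [DivisionMonoid G] (b : G) (j : ℕ) :
    b ^ (-((j : ℤ) + 1)) = b⁻¹ ^ (j + 1) := by
  rw [← Nat.cast_succ, zpow_neg, zpow_natCast, inv_pow]

lemma piSum_eq_tsum_inv_pow (b : ℂ) (d : ℕ → ℤ) :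
    piSum b d = ∑' j, (d j : ℂ) * b⁻¹ ^ (j + 1) := by
  simp only [piSum, zpow_neg_natCast_add_one]

lemma norm_inv_lt_one_of_one_lt_norm {𝕜 : Type*} [NormedDivisionRing 𝕜] {b : 𝕜} (hb : 1 < ‖b‖) :
    ‖b⁻¹‖ < 1 := by
  rw [norm_inv]
  exact inv_lt_one_of_one_lt₀ hb

section piSum

variable {b : ℂ} {d : ℕ → ℤ} {M : ℝ}

lemma summable_digit_mul_inv_pow (hb : 1 < ‖b‖) (hd : ∀ j, |(d j : ℝ)| ≤ M) :
    Summable fun j => (d j : ℂ) * b⁻¹ ^ (j + 1) := by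
  have hgeom := (summable_geometric_of_lt_one (norm_nonneg _)
    (norm_inv_lt_one_of_one_lt_norm hb)).mul_left (M * ‖b⁻¹‖)
  refine .of_norm_bounded (g := fun j => M * ‖b⁻¹‖ ^ (j + 1)) (hgeom.congr fun j => by ring)
    fun j => ?_
  rw [norm_mul, norm_pow, norm_intCast]
  exact mul_le_mul_of_nonneg_right (hd j) (by positivity)

lemma summable_digit_mul_zpow (hb : 1 < ‖b‖) (hd : ∀ j, |(d j : ℝ)| ≤ M) :
    Summable fun j : ℕ => (d j : ℂ) * b ^ (-((j : ℤ) + 1)) := by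
  simpa only [zpow_neg_natCast_add_one] using summable_digit_mul_inv_pow hb hd

lemma piSum_sub {e : ℕ → ℤ} (hb : 1 < ‖b‖) (hd : ∀ j, |(d j : ℝ)| ≤ M)
    (he : ∀ j, |(e j : ℝ)| ≤ M) : piSum b (d - e) = piSum b d - piSum b e := by
  simp only [piSum, Pi.sub_apply, Int.cast_sub, sub_mul]
  exact (summable_digit_mul_zpow hb hd).tsum_sub (summable_digit_mul_zpow hb he)

lemma mul_piSum (hb : 1 < ‖b‖) (hd : ∀ j, |(d j : ℝ)| ≤ M) :
    b * piSum b d = d 0 + piSum b (fun j => d (j + 1)) := by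
  have hb0 : b ≠ 0 := norm_pos_iff.1 (one_pos.trans hb)
  rw [piSum_eq_tsum_inv_pow, piSum_eq_tsum_inv_pow,
    (summable_digit_mul_inv_pow hb hd).tsum_eq_zero_add, mul_add, ← tsum_mul_left, zero_add,
    pow_one]
  congr 1
  · field_simp
  · exact tsum_congr fun j => by rw [pow_succ' _ (j + 1)]; field_simp

lemma piSum_add_two_eq_of_piSum_eq_zero (hb : 1 < ‖b‖) (hd : ∀ j, |(d j : ℝ)| ≤ M)
    (h : piSum b d = 0) : piSum b (fun j => d (j + 1 + 1)) = -(b * d 0 + d 1) := by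
  have h1 := mul_piSum hb hd
  have h2 := mul_piSum hb (fun j => hd (j + 1))
  rw [h, mul_zero] at h1
  simp only [zero_add] at h2
  linear_combination -h2 - b * h1

lemma piSum_add_three_eq_of_piSum_eq_zero (hb : 1 < ‖b‖) (hd : ∀ j, |(d j : ℝ)| ≤ M)
    (h : piSum b d = 0) :
    piSum b (fun j => d (j + 1 + 1 + 1)) = -(b ^ 2 * d 0 + b * d 1 + d 2) := by
  have h3 := mul_piSum hb (fun j => hd (j + 1 + 1))
  rw [piSum_add_two_eq_of_piSum_eq_zero hb hd h] at h3
  simp only [zero_add] at h3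
  linear_combination -h3

lemma piSum_eq_sum_add_zpow_mul (hb : 1 < ‖b‖) (hd : ∀ j, |(d j : ℝ)| ≤ M) (k : ℕ) :
    piSum b d = ∑ j : Fin k, (d j : ℂ) * b ^ (-((j : ℤ) + 1)) +
      b ^ (-(k : ℤ)) * piSum b (fun j => d (j + k)) := by
  have hb0 : b ≠ 0 := norm_pos_iff.1 (one_pos.trans hb)
  rw [piSum, ← (summable_digit_mul_zpow hb hd).sum_add_tsum_nat_add k,
    Fin.sum_univ_eq_sum_range (fun j => (d j : ℂ) * b ^ (-((j : ℤ) + 1))), piSum, ← tsum_mul_left]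
  congr 1
  refine tsum_congr fun j => ?_
  rw [mul_left_comm, ← zpow_add₀ hb0]
  push_cast
  ring_nf

lemma abs_im_piSum_le (hb : 1 < ‖b‖) (hd : ∀ j, |(d j : ℝ)| ≤ M) :
    |(piSum b d).im| ≤ M * |b.im| / (‖b‖ - 1) ^ 2 := by
  set w := b⁻¹
  have hw := norm_inv_lt_one_of_one_lt_norm hb
  have hsum : HasSum (fun j : ℕ => M * |w.im| * ((j + 1 : ℕ) * ‖w‖ ^ j))
      (M * |w.im| * (1 / (1 - ‖w‖) ^ 2)) := by
    have := hasSum_choose_mul_geometric_of_norm_lt_one (𝕜 := ℝ) (r := ‖w‖) 1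
      (by rwa [Real.norm_eq_abs, abs_norm])
    simpa using this.mul_left (M * |w.im|)
  rw [piSum_eq_tsum_inv_pow, im_tsum (summable_digit_mul_inv_pow hb hd), ← Real.norm_eq_abs]
  refine (tsum_of_norm_bounded hsum fun j => ?_).trans_eq ?_
  · have hM : 0 ≤ M := (abs_nonneg _).trans (hd 0)
    simp only [Real.norm_eq_abs, mul_im, intCast_re, intCast_im, zero_mul, add_zero, abs_mul]
    calc |(d j : ℝ)| * |(w ^ (j + 1)).im| ≤ M * ((j + 1) * |w.im| * ‖w‖ ^ j) :=
          mul_le_mul (hd j) (abs_im_pow_succ_le w j) (abs_nonneg _) hM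
      _ = _ := by push_cast; ring
  · have hb0 : ‖b‖ ≠ 0 := (one_pos.trans hb).ne'
    have hb1 : ‖b‖ - 1 ≠ 0 := by linarith
    rw [inv_im, abs_div, abs_neg, normSq_eq_norm_sq, abs_of_nonneg (sq_nonneg ‖b‖), norm_inv]
    field_simp

end piSum

lemma abs_intCast_le_of_mem_Icc {x N : ℤ} (hx : x ∈ Set.Icc 0 N) : |(x : ℝ)| ≤ N := by
  rw [abs_of_nonneg (by exact_mod_cast hx.1)]
  exact_mod_cast hx.2

section base

variable {n : ℕ}

lemma norm_neg_natCast_add_I (n : ℕ) : ‖-(n : ℂ) + I‖ = √((n : ℝ) ^ 2 + 1) := by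
  simp [norm_def, normSq_apply, sq]

lemma one_lt_norm_neg_natCast_add_I (hn : 0 < n) : 1 < ‖-(n : ℂ) + I‖ := by
  have : (1 : ℝ) ≤ n := by exact_mod_cast hn
  rw [norm_neg_natCast_add_I, Real.lt_sqrt zero_le_one]
  nlinarith

lemma piSum_mem_kTile_fundTile (hn : 0 < n) {e : ℕ → ℤ} (he : ∀ j, e j ∈ Set.Icc 0 ((n : ℤ) ^ 2))
    (k : ℕ) : piSum (-(n : ℂ) + I) e ∈ kTile (-(n : ℂ) + I) (fundTile n) k (fun j => e j) :=
  ⟨_, ⟨fun j => e (j + k), fun j => he (j + k), rfl⟩,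
    piSum_eq_sum_add_zpow_mul (one_lt_norm_neg_natCast_add_I hn)
      (fun j => abs_intCast_le_of_mem_Icc (he j)) k⟩

def sparseGap (n : ℕ) : ℤ := if 5 ≤ n then 3 else 4

lemma Sparse.sparseGap_le_abs_sub {Δ : Set ℤ} (hs : Sparse n Δ) (hn : 2 ≤ n) {δ δ' : ℤ}
    (hδ : δ ∈ Δ) (hδ' : δ' ∈ Δ) (hne : δ ≠ δ') : sparseGap n ≤ |δ - δ'| := by
  obtain ⟨h5, h234⟩ := hs δ hδ δ' hδ' hne
  unfold sparseGap
  split_ifs with h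
  · linarith [h5 h]
  · linarith [h234 (by omega)]

lemma two_mul_sq_lt_sparseGap_mul (hn : 3 ≤ n) :
    2 * (n : ℝ) ^ 2 < sparseGap n * (√((n : ℝ) ^ 2 + 1) - 1) ^ 2 := by
  have hr := Real.sq_sqrt (by positivity : (0 : ℝ) ≤ n ^ 2 + 1)
  unfold sparseGap
  split_ifs with h5
  · have hn5 : (25 : ℝ) ≤ n ^ 2 := by exact_mod_cast Nat.pow_le_pow_left h5 2
    have : √((n : ℝ) ^ 2 + 1) < (n ^ 2 + 6) / 6 := (Real.sqrt_lt' (by positivity)).2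
      (by nlinarith [mul_nonneg (sub_nonneg.2 hn5) (sq_nonneg (n : ℝ))])
    push_cast
    nlinarith
  · have hn3 : (9 : ℝ) ≤ n ^ 2 := by exact_mod_cast Nat.pow_le_pow_left hn 2
    have : √((n : ℝ) ^ 2 + 1) < (n ^ 2 + 4) / 4 := (Real.sqrt_lt' (by positivity)).2
      (by nlinarith [mul_nonneg (sub_nonneg.2 hn3) (sq_nonneg (n : ℝ))])
    push_cast
    nlinarith

lemma head_eq_zero_of_piSum_eq_zero (hn : 2 ≤ n) {g : ℕ → ℤ} (hbd : ∀ j, |g j| ≤ 2 * n ^ 2)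
    (hgap : ∀ j, g j ≠ 0 → sparseGap n ≤ |g j|) (h : piSum (-(n : ℂ) + I) g = 0) : g 0 = 0 := by
  set b := -(n : ℂ) + I
  have hb : 1 < ‖b‖ := one_lt_norm_neg_natCast_add_I (by omega)
  have hM : ∀ j, |(g j : ℝ)| ≤ 2 * n ^ 2 := fun j => by exact_mod_cast hbd j
  have him2 : |(g 0 : ℝ)| ≤ 2 * n ^ 2 / (√((n : ℝ) ^ 2 + 1) - 1) ^ 2 := by
    simpa [piSum_add_two_eq_of_piSum_eq_zero hb hM h, b, norm_neg_natCast_add_I] using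
      abs_im_piSum_le hb (fun j => hM (j + 1 + 1))
  by_contra h0
  have hgap0 : (sparseGap n : ℝ) ≤ |(g 0 : ℝ)| := by exact_mod_cast hgap 0 h0
  obtain rfl | hn3 := hn.eq_or_lt
  · -- here `him2` is too weak: `8 / (√5 - 1)² ≈ 5.2` exceeds the gap `4`
    have him3 := abs_im_piSum_le hb (fun j => hM (j + 1 + 1 + 1))
    rw [piSum_add_three_eq_of_piSum_eq_zero hb hM h, norm_neg_natCast_add_I] at him3
    norm_num [b, sq, sparseGap, neg_add_eq_sub] at him3 hgap0 hM
    have hsqrt5 : 2 < √5 := (Real.lt_sqrt zero_le_two).2 (by norm_num)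
    have hlow : 8 ≤ |4 * (g 0 : ℝ) - g 1| := by
      have := abs_sub_abs_le_abs_sub (4 * (g 0 : ℝ)) (g 1)
      rw [abs_mul, abs_of_pos four_pos] at this
      linarith [hM 1]
    rw [le_div_iff₀ (by nlinarith)] at him3
    nlinarith
  · have hr : 0 < (√((n : ℝ) ^ 2 + 1) - 1) ^ 2 := by
      have := hb
      rw [norm_neg_natCast_add_I] at this
      nlinarith
    rw [le_div_iff₀ hr] at him2
    nlinarith [two_mul_sq_lt_sparseGap_mul hn3, mul_le_mul_of_nonneg_right hgap0 hr.le]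

lemma eq_zero_of_piSum_eq_zero (hn : 2 ≤ n) {g : ℕ → ℤ} (hbd : ∀ j, |g j| ≤ 2 * n ^ 2)
    (hgap : ∀ j, g j ≠ 0 → sparseGap n ≤ |g j|) (h : piSum (-(n : ℂ) + I) g = 0) : g = 0 := by
  have hb : 1 < ‖-(n : ℂ) + I‖ := one_lt_norm_neg_natCast_add_I (by omega)
  funext j
  induction j generalizing g with
  | zero => exact head_eq_zero_of_piSum_eq_zero hn hbd hgap h
  | succ j ih =>
    refine ih (fun j => hbd (j + 1)) (fun j => hgap (j + 1)) ?_
    have := mul_piSum hb (fun j => (by exact_mod_cast hbd j : |(g j : ℝ)| ≤ 2 * n ^ 2))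
    rwa [h, head_eq_zero_of_piSum_eq_zero hn hbd hgap h, mul_zero, Int.cast_zero, zero_add,
      eq_comm] at this

theorem Sparse.eq_of_piSum_eq {Δ : Set ℤ} (hs : Sparse n Δ) (hn : 2 ≤ n)
    (hΔ : ∀ δ ∈ Δ, |δ| ≤ n ^ 2) {β γ : ℕ → ℤ} (hβ : ∀ j, β j ∈ Δ) (hγ : ∀ j, γ j ∈ Δ)
    (h : piSum (-(n : ℂ) + I) β = piSum (-(n : ℂ) + I) γ) : β = γ := by
  have hbd {δ : ℕ → ℤ} (hδ : ∀ j, δ j ∈ Δ) (j : ℕ) : |(δ j : ℝ)| ≤ n ^ 2 := by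
    exact_mod_cast hΔ _ (hδ j)
  rw [← sub_eq_zero]
  refine eq_zero_of_piSum_eq_zero hn (fun j => ?_)
    (fun j hj => hs.sparseGap_le_abs_sub hn (hβ j) (hγ j) (sub_ne_zero.1 hj)) ?_
  · have := abs_sub (β j) (γ j)
    rw [Pi.sub_apply]
    linarith [hΔ _ (hβ j), hΔ _ (hγ j)]
  · rw [piSum_sub (one_lt_norm_neg_natCast_add_I (by omega)) (hbd hβ) (hbd hγ), h, sub_self]

end base

theorem stmt_8_general (n : ℕ) (hn : 2 ≤ n) (D : Set ℤ)
    (hD : D ⊆ Set.Icc 0 ((n : ℤ) ^ 2))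
    (hsparse : Sparse n (D - D))
    (α : ℕ → ℤ) (hα : ∀ j, α j ∈ D - D)
    (Cα : Set ℂ)
    (hCα : Cα = restrictedDigitSet n D ∩ (restrictedDigitSet n D + {piSum (-(n : ℂ) + Complex.I) α}))
    (k : ℕ) :
    (∀ d : Fin k → ℤ, (∀ j : Fin k, d j ∈ D ∩ (D + {α (j : ℕ)})) →
        (kTile (-(n : ℂ) + Complex.I) (fundTile n) k d ∩ Cα).Nonempty) ∧
      Cα ⊆ ⋃ d : Fin k → ℤ, ⋃ (_ : ∀ j : Fin k, d j ∈ D ∩ (D + {α (j : ℕ)})),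
        kTile (-(n : ℂ) + Complex.I) (fundTile n) k d := by
  subst hCα
  have hb : 1 < ‖-(n : ℂ) + I‖ := one_lt_norm_neg_natCast_add_I (by omega)
  have hΔ (δ : ℤ) (hδ : δ ∈ D - D) : |δ| ≤ n ^ 2 := abs_le_of_mem_sub hD hδ
  have hαb (j : ℕ) : |(α j : ℝ)| ≤ ((n ^ 2 : ℤ) : ℝ) := by exact_mod_cast hΔ _ (hα j)
  have hDb {e : ℕ → ℤ} (he : ∀ j, e j ∈ D) (j : ℕ) : |(e j : ℝ)| ≤ ((n ^ 2 : ℤ) : ℝ) :=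
    abs_intCast_le_of_mem_Icc (hD (he j))
  refine ⟨fun d hd => ?_, ?_⟩
  · have hext (j : ℕ) : ∃ x, x ∈ D ∩ (D + {α j}) := by
      obtain ⟨a, ha, a', ha', hαj⟩ := hα j
      exact ⟨a, ha, Set.mem_add_singleton_iff_sub_mem.2 (by rwa [← hαj, sub_sub_cancel])⟩
    obtain ⟨e, he, hed⟩ := exists_extend_fin hext hd
    obtain rfl : (fun j : Fin k => e j) = d := funext hed
    have heD (j : ℕ) : e j ∈ D := (he j).1
    have heα (j : ℕ) : (e - α) j ∈ D := Set.mem_add_singleton_iff_sub_mem.1 (he j).2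
    refine ⟨_, piSum_mem_kTile_fundTile (by omega) (fun j => hD (heD j)) k, ⟨e, heD, rfl⟩, _,
      ⟨e - α, heα, rfl⟩, _, rfl, ?_⟩
    rw [piSum_sub hb (hDb heD) hαb]
    exact sub_add_cancel _ _
  · rintro _ ⟨⟨e, he, rfl⟩, _, ⟨f, hf, rfl⟩, _, rfl, hz⟩
    have hef : e - f = α := hsparse.eq_of_piSum_eq hn hΔ (fun j => Set.sub_mem_sub (he j) (hf j)) hα
      (by rw [piSum_sub hb (hDb he) (hDb hf), ← hz, add_sub_cancel_left])
    refine Set.mem_iUnion₂.2 ⟨fun j => e j, fun j => ⟨he j, ?_⟩,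
      piSum_mem_kTile_fundTile (by omega) (fun j => hD (he j)) k⟩
    rw [Set.mem_add_singleton_iff_sub_mem, ← hef, Pi.sub_apply, sub_sub_cancel]
    exact hf j

theorem stmt_8 (n : ℕ) (hn : 2 ≤ n) (D : Set ℤ)
    (hD : D ⊆ Set.Icc 0 ((n : ℤ) ^ 2))
    (hsparse : Sparse n (D - D))
    (α : ℕ → ℤ) (hα : ∀ j, α j ∈ D - D)
    (Cα : Set ℂ)
    (hCα : Cα = restrictedDigitSet n D ∩ (restrictedDigitSet n D + {piSum (-(n : ℂ) + Complex.I) α}))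
    (k : ℕ) (hk : 1 ≤ k) :
    (∀ d : Fin k → ℤ, (∀ j : Fin k, d j ∈ D ∩ (D + {α (j : ℕ)})) →
        (kTile (-(n : ℂ) + Complex.I) (fundTile n) k d ∩ Cα).Nonempty) ∧
      Cα ⊆ ⋃ d : Fin k → ℤ, ⋃ (_ : ∀ j : Fin k, d j ∈ D ∩ (D + {α (j : ℕ)})),
        kTile (-(n : ℂ) + Complex.I) (fundTile n) k d :=
  stmt_8_general n hn D hD hsparse α hα Cα hCα k
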